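/- arXiv:1503.03311 — 2 statements merged into one kernel-verified Lean document; each statement's English description precedes it below -/
import Mathlib

section
/- Let W: 𝕋^d → ℝ, Ω ∈ ℝ^{d-1}, β = (β_ψ, β_η) ∈ ℝ^{d-1}×ℝ, and suppose for each η ∈ 𝕋 the triple (v_η, σ(η), λ(η)) solves the equilibrium equation v_η(ψ+Ω) + v_η(ψ−Ω) − 2v_η(ψ) + W((ψ,η) + β v_η(ψ)) + σ(η) v_η(ψ) + λ(η) = 0 for all ψ ∈ 𝕋^{d-1}. Then for any function ι: 𝕋 → ℝ, the transformed family ṽ_η(ψ) = v_{η+ι(η)β_η}(ψ + ι(η)β_ψ) + ι(η), σ̃(η) = σ(η + ι(η)β_η), λ̃(η) = λ(η + ι(η)β_η) − ι(η)·σ(η + ι(η)β_η) also solves the equilibrium equation: ṽ_η(ψ+Ω) + ṽ_η(ψ−Ω) − 2ṽ_η(ψ) + W((ψ,η) + β ṽ_η(ψ)) + σ̃(η) ṽ_η(ψ) + λ̃(η) = 0 for all ψ, η. -/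
noncomputable section

/-- the gauge symmetry of the equilibrium equation.  Everything takes place
on the real torus: `v : 𝕋^{d-1} × 𝕋 → ℝ` is written `v ψ η`, and `W : 𝕋^d → ℝ`. -/
theorem statement11 (n : ℕ) (Ω bψ : Fin n → ℝ) (bη : ℝ)
    (W : (Fin n → ℝ) → ℝ → ℝ) (v : (Fin n → ℝ) → ℝ → ℝ) (σ lam : ℝ → ℝ)
    -- `W` is a function on the torus `𝕋^d`
    (hWper : ∀ (x : Fin n → ℝ) (y : ℝ) (k : Fin n → ℤ) (m : ℤ),
      W (fun j => x j + (k j : ℝ)) (y + (m : ℝ)) = W x y)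
    -- `(v_η, σ(η), λ(η))` solves the equilibrium equation for every `η`
    (hsol : ∀ (ψ : Fin n → ℝ) (η : ℝ),
      v (fun j => ψ j + Ω j) η + v (fun j => ψ j - Ω j) η - 2 * v ψ η
        + W (fun j => ψ j + bψ j * v ψ η) (η + bη * v ψ η)
        + σ η * v ψ η + lam η = 0)
    -- arbitrary gauge function `ι`
    (ι : ℝ → ℝ) :
    -- the transformed family also solves the equilibrium equation
    ∀ (ψ : Fin n → ℝ) (η : ℝ),
      (fun (ψ' : Fin n → ℝ) (η' : ℝ) =>
          v (fun j => ψ' j + ι η' * bψ j) (η' + ι η' * bη) + ι η')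
        (fun j => ψ j + Ω j) η
      + (fun (ψ' : Fin n → ℝ) (η' : ℝ) =>
          v (fun j => ψ' j + ι η' * bψ j) (η' + ι η' * bη) + ι η')
        (fun j => ψ j - Ω j) η
      - 2 * (v (fun j => ψ j + ι η * bψ j) (η + ι η * bη) + ι η)
      + W (fun j => ψ j + bψ j * (v (fun j => ψ j + ι η * bψ j) (η + ι η * bη) + ι η))
          (η + bη * (v (fun j => ψ j + ι η * bψ j) (η + ι η * bη) + ι η))
      + σ (η + ι η * bη) * (v (fun j => ψ j + ι η * bψ j) (η + ι η * bη) + ι η)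
      + (lam (η + ι η * bη) - ι η * σ (η + ι η * bη)) = 0 := by
  intro ψ η
  have h := hsol (fun j => ψ j + ι η * bψ j) (η + ι η * bη)
  have e1 : (fun j => ψ j + Ω j + ι η * bψ j) = (fun j => ψ j + ι η * bψ j + Ω j) := by
    funext j; ring
  have e2 : (fun j => ψ j - Ω j + ι η * bψ j) = (fun j => ψ j + ι η * bψ j - Ω j) := by
    funext j; ring
  have e3 : (fun j => ψ j + bψ j * (v (fun j => ψ j + ι η * bψ j) (η + ι η * bη) + ι η))
      = (fun j => ψ j + ι η * bψ j + bψ j * v (fun j => ψ j + ι η * bψ j) (η + ι η * bη)) := by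
    funext j; ring
  have e4 : η + bη * (v (fun j => ψ j + ι η * bψ j) (η + ι η * bη) + ι η)
      = η + ι η * bη + bη * v (fun j => ψ j + ι η * bψ j) (η + ι η * bη) := by ring
  simp only [e1, e2, e3, e4]
  linarith
end
end

section
/- Fix η, Ω, β = (β_ψ,β_η) and W as in the equilibrium equation. Suppose v⁰ ∈ 𝒜_ρ, σ⁰, λ⁰ ∈ ℝ satisfy ℰ[v⁰,σ⁰,λ⁰] = e with ‖e‖_ρ < ε, c⁰ ∈ 𝒜_ρ satisfies (−c⁰ + 2 − ∂_βW_{v⁰} − σ⁰)c⁰_+ − 1 = f with ‖f‖_ρ < ε, and the Newton corrections v̂, σ̂, λ̂, ĉ satisfy 𝒜_+𝒜_− v̂ + σ̂ v⁰ + λ̂ = −e (where 𝒜_+𝒜_− is the factorized linearized operator with coefficients determined by c⁰ and the normalization b = 1) and −c⁰_+ ĉ + (−c⁰ + 2 − ∂_βW_{v⁰} − σ⁰) ĉ_+ − c⁰_+ σ̂ − ∂_β∂_βW_{v⁰} c⁰_+ v̂ = −f. Then the new errors satisfy the algebraic identities: ℰ[v⁰+v̂, σ⁰+σ̂, λ⁰+λ̂]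 = −f v̂ + σ̂ v̂ + (W_{v⁰+v̂} − W_{v⁰} − ∂_βW_{v⁰} v̂) and ℱ[v⁰+v̂, σ⁰+σ̂, c⁰+ĉ] = [−ĉ − (∂_βW_{v⁰+v̂} − ∂_βW_{v⁰}) − σ̂] ĉ_+ − [(∂_βW_{v⁰+v̂} − ∂_βW_{v⁰}) c⁰_+ − ∂_β∂_βW_{v⁰} c⁰_+ v̂]. -/
noncomputable section

/-- `∂_β W = β·∇W` (real setting, `β = (β_ψ, β_η)`). -/
def RdbW (n : ℕ) (bψ : Fin n → ℝ) (bη : ℝ) (W : (Fin n → ℝ) → ℝ → ℝ)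
    (x : Fin n → ℝ) (y : ℝ) : ℝ :=
  deriv (fun t : ℝ => W (fun j => x j + t * bψ j) (y + t * bη)) 0

/-- `∂_β ∂_β W`. -/
def Rd2bW (n : ℕ) (bψ : Fin n → ℝ) (bη : ℝ) (W : (Fin n → ℝ) → ℝ → ℝ)
    (x : Fin n → ℝ) (y : ℝ) : ℝ :=
  deriv (fun t : ℝ => RdbW n bψ bη W (fun j => x j + t * bψ j) (y + t * bη)) 0

/-- The equilibrium operator `ℰ[v,σ,λ]` (η fixed). -/
def REop (n : ℕ) (Ω bψ : Fin n → ℝ) (bη η : ℝ) (W : (Fin n → ℝ) → ℝ → ℝ)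
    (v : (Fin n → ℝ) → ℝ) (σ lam : ℝ) : (Fin n → ℝ) → ℝ :=
  fun x => v (fun j => x j + Ω j) + v (fun j => x j - Ω j) - 2 * v x
    + W (fun j => x j + v x * bψ j) (η + v x * bη) + σ * v x + lam

/-- The factorization operator `ℱ[v,σ,c]` (η fixed). -/
def RFop (n : ℕ) (Ω bψ : Fin n → ℝ) (bη η : ℝ) (W : (Fin n → ℝ) → ℝ → ℝ)
    (v c : (Fin n → ℝ) → ℝ) (σ : ℝ) : (Fin n → ℝ) → ℝ :=
  fun x => (-(c x) + 2 - RdbW n bψ bη W (fun j => x j + v x * bψ j) (η + v x * bη) - σ) *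
      c (fun j => x j + Ω j) - 1

/-- algebraic identities for the errors after one quasi-Newton step.  Here
`𝒜₊𝒜₋` is the factorized linearized operator determined by `c⁰` with the normalization
`b = 1` (i.e. `a = (c⁰₊)⁻¹`, `d = 1`), so that
`𝒜₊𝒜₋ v̂ = v̂₊ + v̂₋ − ((c⁰₊)⁻¹ + c⁰) v̂`, which differs from the linearization
`T_Ω + T_{−Ω} − 2 + ∂_βW_{v⁰} + σ⁰` exactly by the multiplication operator
`f·(c⁰₊)⁻¹` coming from the factorization error `f`. -/
theorem statement12 (n : ℕ) (Ω bψ : Fin n → ℝ) (bη η : ℝ)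
    (W : (Fin n → ℝ) → ℝ → ℝ)
    (v0 c0 vh ch : (Fin n → ℝ) → ℝ) (σ0 lam0 σh lamh ε : ℝ)
    (e f : (Fin n → ℝ) → ℝ)
    -- `ℰ[v⁰,σ⁰,λ⁰] = e` with `‖e‖ < ε`
    (he : ∀ x, REop n Ω bψ bη η W v0 σ0 lam0 x = e x)
    (hesmall : ∀ x, |e x| < ε)
    -- `ℱ[v⁰,σ⁰,c⁰] = f` with `‖f‖ < ε`
    (hf : ∀ x, RFop n Ω bψ bη η W v0 c0 σ0 x = f x)
    (hfsmall : ∀ x, |f x| < ε)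
    -- non-vanishing of `c⁰₊` (needed to invert the leading coefficient)
    (hc0 : ∀ x : Fin n → ℝ, c0 (fun j => x j + Ω j) ≠ 0)
    -- Newton equation for the equilibrium: `𝒜₊𝒜₋ v̂ + σ̂ v⁰ + λ̂ = −e`
    (hNewtonE : ∀ x : Fin n → ℝ,
      vh (fun j => x j + Ω j) + vh (fun j => x j - Ω j)
        - ((c0 (fun j => x j + Ω j))⁻¹ + c0 x) * vh x + σh * v0 x + lamh = - e x)
    -- Newton equation for the factorization:
    -- `−c⁰₊ ĉ + (−c⁰ + 2 − ∂_βW_{v⁰} − σ⁰) ĉ₊ − c⁰₊ σ̂ − ∂_β∂_βW_{v⁰} c⁰₊ v̂ = −f`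
    (hNewtonF : ∀ x : Fin n → ℝ,
      -(c0 (fun j => x j + Ω j)) * ch x
        + (-(c0 x) + 2 - RdbW n bψ bη W (fun j => x j + v0 x * bψ j) (η + v0 x * bη) - σ0) *
            ch (fun j => x j + Ω j)
        - c0 (fun j => x j + Ω j) * σh
        - Rd2bW n bψ bη W (fun j => x j + v0 x * bψ j) (η + v0 x * bη) *
            c0 (fun j => x j + Ω j) * vh x = - f x) :
    -- new error of the equilibrium equation
    (∀ x : Fin n → ℝ,
      REop n Ω bψ bη η W (fun y => v0 y + vh y) (σ0 + σh) (lam0 + lamh) x =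
        - f x * (c0 (fun j => x j + Ω j))⁻¹ * vh x + σh * vh x
          + (W (fun j => x j + (v0 x + vh x) * bψ j) (η + (v0 x + vh x) * bη)
              - W (fun j => x j + v0 x * bψ j) (η + v0 x * bη)
              - RdbW n bψ bη W (fun j => x j + v0 x * bψ j) (η + v0 x * bη) * vh x)) ∧
    -- new error of the factorization equation
    (∀ x : Fin n → ℝ,
      RFop n Ω bψ bη η W (fun y => v0 y + vh y) (fun y => c0 y + ch y) (σ0 + σh) x =
        (-(ch x)
            - (RdbW n bψ bη W (fun j => x j + (v0 x + vh x) * bψ j) (η + (v0 x + vh x) * bη)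
                - RdbW n bψ bη W (fun j => x j + v0 x * bψ j) (η + v0 x * bη))
            - σh) * ch (fun j => x j + Ω j)
          - ((RdbW n bψ bη W (fun j => x j + (v0 x + vh x) * bψ j) (η + (v0 x + vh x) * bη)
                - RdbW n bψ bη W (fun j => x j + v0 x * bψ j) (η + v0 x * bη)) *
                c0 (fun j => x j + Ω j)
              - Rd2bW n bψ bη W (fun j => x j + v0 x * bψ j) (η + v0 x * bη) *
                  c0 (fun j => x j + Ω j) * vh x)) := by
  constructor
  · intro x
    have hinv : c0 (fun j => x j + Ω j) * (c0 (fun j => x j + Ω j))⁻¹ = 1 :=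
      mul_inv_cancel₀ (hc0 x)
    have he' := he x
    have hf' := hf x
    simp only [REop] at he' ⊢
    simp only [RFop] at hf'
    linear_combination he' + hNewtonE x - ((c0 (fun j => x j + Ω j))⁻¹ * vh x) * hf'
      + (vh x * (-(c0 x) + 2 - RdbW n bψ bη W (fun j => x j + v0 x * bψ j) (η + v0 x * bη)
          - σ0)) * hinv
  · intro x
    have hf' := hf x
    simp only [RFop] at hf' ⊢
    linear_combination hf' + hNewtonF x
end
end
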